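/- Let A, B, B₀ > 0 and α > β > 1 with α > 3. For each integer N ≥ 2 define the ring radius r*_N = (Ã_N/B̃_N)^{1/(α−β)}, where Ã_N = (αA/2^{α+1}) Σ_{j=1}^{N−1} |sin(jπ/N)|^{−α} and B̃_N = (β/2^{β+1}) Σ_{j=1}^{N−1} |sin(jπ/N)|^{−β} [(B−B₀) cos²(jπ/N) + B₀]. Then, as N → ∞, 2π r*_N / N → h̄, where h̄ = (αAζ(α)/(βBζ(β)))^{1/(α−β)}; that is, r*_N ∼ (N/2π) h̄. -/

import Mathlib

/-- The Riemann zeta function for real `x > 1`, `ζ(x) = Σ_{n ≥ 1} n^{−x}`. -/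
noncomputable def zetaR (x : ℝ) : ℝ := ∑' n : ℕ, (1 : ℝ) / ((n : ℝ) + 1) ^ x

/-- `Ã_N = (αA/2^{α+1}) Σ_{j=1}^{N−1} |sin(jπ/N)|^{−α}`. -/
noncomputable def ringA (A α : ℝ) (N : ℕ) : ℝ :=
  (α * A / 2 ^ (α + 1)) *
    ∑ j ∈ Finset.Icc 1 (N - 1), 1 / |Real.sin (j * Real.pi / N)| ^ α

/-- `B̃_N = (β/2^{β+1}) Σ_{j=1}^{N−1} |sin(jπ/N)|^{−β} [(B−B₀)cos²(jπ/N) + B₀]`. -/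
noncomputable def ringB (B B₀ β : ℝ) (N : ℕ) : ℝ :=
  (β / 2 ^ (β + 1)) *
    ∑ j ∈ Finset.Icc 1 (N - 1),
      (1 / |Real.sin (j * Real.pi / N)| ^ β) *
        ((B - B₀) * Real.cos (j * Real.pi / N) ^ 2 + B₀)

/-- The critical ring radius `r*_N = (Ã_N/B̃_N)^{1/(α−β)}`. -/
noncomputable def ringRadius (A B B₀ α β : ℝ) (N : ℕ) : ℝ :=
  (ringA A α N / ringB B B₀ β N) ^ (1 / (α - β))

/-!
After scaling by `(π/N)^γ`, the sum `Σ_{j=1}^{N-1} g(jπ/N) / |sin(jπ/N)|^γ` tends to `2 g(0) ζ(γ)`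
for every bounded weight `g` that is continuous at `0` and symmetric under `x ↦ π - x`: by
symmetry the sum is twice a sum over `j ≤ N/2`, whose `j`-th term tends to `g(0)/j^γ` because
`sin x ~ x`, and is dominated by `(π/2)^γ sup|g| / j^γ` by Jordan's inequality
`sin x ≥ 2x/π` on `[0, π/2]`, so Tannery's theorem applies. Applied to `Ã_N` (weight `1`) and
`B̃_N` (weight `(B-B₀)cos² + B₀`, equal to `B` at `0`) this gives `Ã_N/B̃_N = (N/2π)^{α-β} R_N`
with `R_N → αAζ(α)/(βBζ(β))`.
-/

open Real Filter Finset Topology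

theorem summable_one_div_nat_add_one_rpow {γ : ℝ} (hγ : 1 < γ) :
    Summable fun n : ℕ => 1 / ((n : ℝ) + 1) ^ γ := by
  simpa using (summable_nat_add_iff 1).mpr (Real.summable_one_div_nat_rpow.mpr hγ)

theorem zetaR_pos {γ : ℝ} (hγ : 1 < γ) : 0 < zetaR γ :=
  (summable_one_div_nat_add_one_rpow hγ).tsum_pos (fun _ => by positivity) 0 (by positivity)

theorem sum_Icc_eq_sum_range_add_sum_range {M : Type*} [AddCommMonoid M] (f : ℕ → M) (N : ℕ)
    (hf : ∀ j ∈ Icc 1 (N - 1), f (N - j) = f j) :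
    ∑ j ∈ Icc 1 (N - 1), f j =
      ∑ k ∈ range ((N - 1) / 2), f (k + 1) + ∑ k ∈ range (N / 2), f (k + 1) := by
  rw [← sum_filter_add_sum_filter_not _ (fun j => 2 * j < N)]
  congr 1
  · refine sum_nbij' (fun j => j - 1) (fun k => k + 1) ?_ ?_ ?_ ?_ ?_ <;>
      intro a ha <;> simp only [mem_filter, mem_Icc, mem_range] at ha ⊢
    all_goals first | omega | (congr 1; omega)
  · refine sum_nbij' (fun j => N - j - 1) (fun k => N - k - 1) ?_ ?_ ?_ ?_ ?_ <;>
      intro a ha <;> simp only [mem_filter, mem_Icc, mem_range] at ha ⊢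
    all_goals try omega
    rw [← hf a (mem_Icc.mpr ha.1)]
    congr 1; omega

theorem div_rpow_div_div_rpow_rpow_one_div_sub {x a b α β : ℝ} (hx : 0 < x) (hab : 0 ≤ a / b)
    (hαβ : α ≠ β) :
    ((a / x ^ α) / (b / x ^ β)) ^ (1 / (α - β)) = (a / b) ^ (1 / (α - β)) / x := by
  have hsplit : (a / x ^ α) / (b / x ^ β) = a / b * (x ^ (α - β))⁻¹ := by
    rw [rpow_sub hx, div_div_div_eq, inv_div, div_mul_div_comm, mul_comm (x ^ α)]
  rw [hsplit, mul_rpow hab (inv_nonneg.2 (rpow_nonneg hx.le _)), inv_rpow (rpow_nonneg hx.le _),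
    ← rpow_mul hx.le, mul_one_div_cancel (sub_ne_zero.2 hαβ), rpow_one, div_eq_mul_inv _ x]

noncomputable def sinPowerTerm (γ : ℝ) (g : ℝ → ℝ) (N j : ℕ) : ℝ :=
  g (j * π / N) * (π / N / |sin (j * π / N)|) ^ γ

theorem sinPowerTerm_reflect (γ : ℝ) {g : ℝ → ℝ} (hg : ∀ x, g (π - x) = g x) {N j : ℕ}
    (hj : j ≤ N) : sinPowerTerm γ g N (N - j) = sinPowerTerm γ g N j := by
  rcases N.eq_zero_or_pos with rfl | hN
  · obtain rfl : j = 0 := by omega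
    rfl
  have harg : ((N - j : ℕ) : ℝ) * π / N = π - j * π / N := by
    rw [Nat.cast_sub hj]
    field_simp
  rw [sinPowerTerm, harg, sin_pi_sub, hg, sinPowerTerm]

theorem tendsto_sinPowerTerm (γ : ℝ) {g : ℝ → ℝ} (hg : ContinuousAt g 0) (k : ℕ) :
    Tendsto (fun N => sinPowerTerm γ g N (k + 1)) atTop
      (𝓝 (g 0 / ((k : ℝ) + 1) ^ γ)) := by
  set m : ℝ := k + 1
  have hm : 0 < m := by positivity
  have hθ : Tendsto (fun N : ℕ => m * π / N) atTop (𝓝 0) :=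
    tendsto_const_div_atTop_nhds_zero_nat _
  have hratio : Tendsto (fun N : ℕ => 1 / (m * |sinc (m * π / N)|)) atTop (𝓝 (1 / m)) := by
    have := ((continuous_sinc.tendsto 0).comp hθ).abs.const_mul m
    simpa using this.inv₀ (by simp [hm.ne'])
  have hlim : g 0 * (1 / m) ^ γ = g 0 / m ^ γ := by
    rw [div_rpow zero_le_one hm.le, one_rpow, mul_one_div]
  rw [← hlim]
  refine (((hg.tendsto.comp hθ).mul (hratio.rpow_const (Or.inl (by positivity)))).congr' ?_)
  filter_upwards [eventually_gt_atTop 0] with N hN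
  have hN' : (0 : ℝ) < N := by exact_mod_cast hN
  have hθpos : 0 < m * π / N := by positivity
  have hsin : |sin (m * π / N)| = m * π / N * |sinc (m * π / N)| := by
    rw [sinc_of_ne_zero hθpos.ne', abs_div, abs_of_pos hθpos, mul_div_cancel₀ _ hθpos.ne']
  have hratio_eq : π / N / |sin (m * π / N)| = 1 / (m * |sinc (m * π / N)|) := by
    rw [hsin]; field_simp
  simp only [Function.comp_apply, sinPowerTerm, Nat.cast_succ, ← hratio_eq, m]

theorem abs_sinPowerTerm_le {γ M : ℝ} (hγ : 0 ≤ γ) {g : ℝ → ℝ} (hg : ∀ x, |g x| ≤ M)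
    {N k : ℕ} (hk : 2 * (k + 1) ≤ N) :
    |sinPowerTerm γ g N (k + 1)| ≤ M * (π / 2) ^ γ / ((k : ℝ) + 1) ^ γ := by
  set m : ℝ := k + 1
  have hm : 0 < m := by positivity
  have hmN : 2 * m ≤ N := by
    have : ((2 * (k + 1) : ℕ) : ℝ) ≤ N := by exact_mod_cast hk
    simpa [m] using this
  have hN : (0 : ℝ) < N := by linarith
  have hθ : 0 < m * π / N := by positivity
  have hθle : m * π / N ≤ π / 2 := by
    rw [div_le_div_iff₀ hN two_pos]; nlinarith [pi_pos]
  have hjordan : 2 * m / N ≤ sin (m * π / N) := by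
    convert mul_le_sin hθ.le hθle using 1; field_simp
  have hratio : π / N / |sin (m * π / N)| ≤ π / 2 / m := by
    rw [abs_of_pos (by linarith [show 0 < 2 * m / N by positivity])]
    calc π / N / sin (m * π / N) ≤ π / N / (2 * m / N) := by gcongr
      _ = π / 2 / m := by field_simp
  have hpow : (π / N / |sin (m * π / N)|) ^ γ ≤ (π / 2) ^ γ / m ^ γ := by
    rw [← div_rpow (by positivity) hm.le]
    exact rpow_le_rpow (by positivity) hratio hγ
  have hterm : sinPowerTerm γ g N (k + 1) = g (m * π / N) * (π / N / |sin (m * π / N)|) ^ γ := by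
    simp only [sinPowerTerm, Nat.cast_succ, m]
  rw [hterm, abs_mul, abs_of_nonneg (rpow_nonneg (by positivity) _), mul_div_assoc M]
  exact mul_le_mul (hg _) hpow (by positivity) ((abs_nonneg _).trans (hg 0))

theorem tendsto_sum_range_sinPowerTerm {γ M : ℝ} (hγ : 1 < γ) {g : ℝ → ℝ}
    (hg0 : ContinuousAt g 0) (hg : ∀ x, |g x| ≤ M) {n : ℕ → ℕ} (hn : Tendsto n atTop atTop)
    (hnN : ∀ N, 2 * n N ≤ N) :
    Tendsto (fun N => ∑ k ∈ range (n N), sinPowerTerm γ g N (k + 1)) atTop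
      (𝓝 (g 0 * zetaR γ)) := by
  have hlim : g 0 * zetaR γ = ∑' k : ℕ, g 0 / ((k : ℝ) + 1) ^ γ := by
    simp only [zetaR, ← tsum_mul_left, mul_one_div]
  have hM : 0 ≤ M := (abs_nonneg _).trans (hg 0)
  rw [hlim]
  conv => enter [1, N]; rw [sum_eq_tsum_indicator]
  refine tendsto_tsum_of_dominated_convergence
    (bound := fun k : ℕ => M * (π / 2) ^ γ / ((k : ℝ) + 1) ^ γ) ?_ (fun k => ?_)
    (Eventually.of_forall fun N k => ?_)
  · simpa only [mul_one_div] using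
      (summable_one_div_nat_add_one_rpow hγ).mul_left (M * (π / 2) ^ γ)
  · refine (tendsto_sinPowerTerm γ hg0 k).congr' ?_
    filter_upwards [hn.eventually_gt_atTop k] with N hN
    simp [hN]
  · by_cases hk : k < n N
    · simpa [hk] using abs_sinPowerTerm_le (by linarith) hg (by linarith [hnN N] : 2 * (k + 1) ≤ N)
    · simp only [coe_range, Set.mem_Iio, hk, not_false_eq_true, Set.indicator_of_notMem, norm_zero]
      positivity

noncomputable def sinPowerSum (γ : ℝ) (g : ℝ → ℝ) (N : ℕ) : ℝ :=
  ∑ j ∈ Icc 1 (N - 1), g (j * π / N) / |sin (j * π / N)| ^ γ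

theorem rpow_mul_sinPowerSum (γ : ℝ) (g : ℝ → ℝ) (N : ℕ) :
    (π / N) ^ γ * sinPowerSum γ g N = ∑ j ∈ Icc 1 (N - 1), sinPowerTerm γ g N j := by
  rw [sinPowerSum, mul_sum]
  refine sum_congr rfl fun j _ => ?_
  rw [sinPowerTerm, div_rpow (by positivity) (abs_nonneg _)]
  ring

theorem tendsto_rpow_mul_sinPowerSum {γ M : ℝ} (hγ : 1 < γ) {g : ℝ → ℝ}
    (hg0 : ContinuousAt g 0) (hg : ∀ x, |g x| ≤ M) (hsymm : ∀ x, g (π - x) = g x) :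
    Tendsto (fun N : ℕ => (π / N) ^ γ * sinPowerSum γ g N) atTop (𝓝 (2 * g 0 * zetaR γ)) := by
  have hhalf := (tendsto_sum_range_sinPowerTerm hγ hg0 hg
      ((Nat.tendsto_div_const_atTop two_ne_zero).comp (tendsto_sub_atTop_nat 1))
      (fun N => by dsimp only [Function.comp_apply]; omega)).add
    (tendsto_sum_range_sinPowerTerm hγ hg0 hg (Nat.tendsto_div_const_atTop two_ne_zero)
      (fun N => by omega))
  rw [mul_assoc, two_mul]
  refine hhalf.congr fun N => ?_
  rw [rpow_mul_sinPowerSum, sum_Icc_eq_sum_range_add_sum_range _ _ fun j hj =>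
    sinPowerTerm_reflect γ hsymm (by simp only [mem_Icc] at hj; omega)]
  rfl

theorem abs_sub_mul_cos_sq_add_le (B B₀ x : ℝ) : |(B - B₀) * cos x ^ 2 + B₀| ≤ |B - B₀| + |B₀| :=
  (abs_add_le _ _).trans <| by
    rw [abs_mul, abs_of_nonneg (sq_nonneg (cos x))]
    gcongr
    exact mul_le_of_le_one_right (abs_nonneg _) (cos_sq_le_one x)

theorem ringA_eq_mul_sinPowerSum (A α : ℝ) (N : ℕ) :
    ringA A α N = α * A / 2 ^ (α + 1) * sinPowerSum α (fun _ => 1) N :=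
  rfl

theorem ringB_eq_mul_sinPowerSum (B B₀ β : ℝ) (N : ℕ) :
    ringB B B₀ β N =
      β / 2 ^ (β + 1) * sinPowerSum β (fun x => (B - B₀) * cos x ^ 2 + B₀) N := by
  simp only [ringB, sinPowerSum, one_div_mul_eq_div]

theorem ringRadius_eq {A B B₀ α β : ℝ} (hαβ : α ≠ β) {N : ℕ} (hN : 0 < N)
    (hR : 0 ≤ α * A * ((π / N) ^ α * sinPowerSum α (fun _ => 1) N) /
      (β * ((π / N) ^ β * sinPowerSum β (fun x => (B - B₀) * cos x ^ 2 + B₀) N))) :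
    ringRadius A B B₀ α β N =
      (α * A * ((π / N) ^ α * sinPowerSum α (fun _ => 1) N) /
        (β * ((π / N) ^ β * sinPowerSum β (fun x => (B - B₀) * cos x ^ 2 + B₀) N))) ^
          (1 / (α - β)) / (2 * π / N) := by
  have hx : 0 < π / N := by positivity
  have hscale (γ c S : ℝ) :
      c / 2 ^ (γ + 1) * S = c / 2 * ((π / N) ^ γ * S) / (2 * π / N) ^ γ := by
    rw [mul_div_assoc 2, mul_rpow zero_le_two hx.le, rpow_add two_pos, rpow_one]
    have := (rpow_pos_of_pos hx γ).ne'
    have := (rpow_pos_of_pos two_pos γ).ne'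
    field_simp
  have hhalves (a b P Q : ℝ) : a / 2 * P / (b / 2 * Q) = a * P / (b * Q) := by ring
  rw [ringRadius, ringA_eq_mul_sinPowerSum, ringB_eq_mul_sinPowerSum, hscale, hscale,
    div_rpow_div_div_rpow_rpow_one_div_sub (by positivity) (by rwa [hhalves]) hαβ, hhalves]

theorem ring_radius_asymptotics_general
    (A B B₀ α β : ℝ) (hA : 0 < A) (hB : 0 < B)
    (hβ : 1 < β) (hαβ : β < α) :
    Filter.Tendsto
      (fun N : ℕ => 2 * Real.pi * ringRadius A B B₀ α β N / (N : ℝ))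
      Filter.atTop
      (nhds ((α * A * zetaR α / (β * B * zetaR β)) ^ (1 / (α - β)))) := by
  have hα : 1 < α := hβ.trans hαβ
  have hzα := zetaR_pos hα
  have hzβ := zetaR_pos hβ
  have hPA := tendsto_rpow_mul_sinPowerSum hα continuousAt_const
    (fun _ => (abs_one (α := ℝ)).le) (fun _ => rfl)
  have hPB := tendsto_rpow_mul_sinPowerSum hβ (g := fun x => (B - B₀) * cos x ^ 2 + B₀)
    (by fun_prop) (fun x => abs_sub_mul_cos_sq_add_le B B₀ x) (fun x => by simp [cos_pi_sub])
  simp only [cos_zero, one_pow, mul_one, sub_add_cancel] at hPB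
  have hR := (hPA.const_mul (α * A)).div (hPB.const_mul β) (by positivity)
  rw [show α * A * (2 * 1 * zetaR α) / (β * (2 * B * zetaR β)) = α * A * zetaR α / (β * B * zetaR β)
    by field_simp] at hR
  refine (hR.rpow_const (Or.inr (one_div_pos.2 (sub_pos.2 hαβ)).le)).congr' ?_
  filter_upwards [eventually_gt_atTop 0, hR.eventually (lt_mem_nhds (by positivity))]
    with N hN hRN
  rw [Pi.div_apply, ringRadius_eq hαβ.ne' hN hRN.le]
  field_simp

/-- As `N → ∞`, `2π r*_N / N → h̄ = (αAζ(α)/(βBζ(β)))^{1/(α−β)}`,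
i.e. `r*_N ∼ (N/2π) h̄`. -/
theorem ring_radius_asymptotics
    (A B B₀ α β : ℝ) (hA : 0 < A) (hB : 0 < B) (hB₀ : 0 < B₀)
    (hβ : 1 < β) (hαβ : β < α) (hα3 : 3 < α) :
    Filter.Tendsto
      (fun N : ℕ => 2 * Real.pi * ringRadius A B B₀ α β N / (N : ℝ))
      Filter.atTop
      (nhds ((α * A * zetaR α / (β * B * zetaR β)) ^ (1 / (α - β)))) :=
  ring_radius_asymptotics_general A B B₀ α β hA hB hβ hαβ
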